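/- Let 𝒟 be a d-standard cone decomposition of a homogeneous K-linear subspace M of R = K[x₁,…,x_N], and let (w,y,h) and (v,z,g) be two distinct elements of 𝒟 such that |w| + deg(h) = |v| + deg(g) and #z ≥ #y > 0. Let x_i ∈ y be arbitrary. Then 𝒟′ := (𝒟 ∖ {(w,y,h)}) ∪ {(w, y∖{x_i}, h), (w+ε_i, y, h)} (where ε_i is the i-th unit vector of ℕ^N) is also a d-standard cone decomposition of M. -/

import Mathlib

open MvPolynomial
open scoped Classical

/-- A cone triple `(w, y, h)`: a multi-index `w`, a set `y` of variables, and a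
polynomial `h`. -/
abbrev ConeTriple (N : ℕ) (K : Type*) [Field K] :=
  (Fin N →₀ ℕ) × Finset (Fin N) × MvPolynomial (Fin N) K

/-- The degree `|w| + deg h` of a cone triple `(w, y, h)`. -/
def coneDeg {N : ℕ} {K : Type*} [Field K] (p : ConeTriple N K) : ℕ :=
  (∑ i, p.1 i) + p.2.2.totalDegree

/-- The cone `C(w,y,h)`: the `K`-linear span of all `x^(w+γ)·h` with `γ` supported
on `y`. -/
noncomputable def cone {N : ℕ} {K : Type*} [Field K] (p : ConeTriple N K) :
    Submodule K (MvPolynomial (Fin N) K) :=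
  Submodule.span K {q | ∃ γ : Fin N →₀ ℕ, (∀ i ∉ p.2.1, γ i = 0) ∧
    q = monomial (p.1 + γ) 1 * p.2.2}

/-- A homogeneous `K`-linear subspace of the polynomial ring. -/
def IsHomogeneousSubspace {N : ℕ} {K : Type*} [Field K]
    (M : Submodule K (MvPolynomial (Fin N) K)) : Prop :=
  ∀ f ∈ M, ∀ e : ℕ, homogeneousComponent e f ∈ M

/-- `𝒟` is a cone decomposition of `M`: each triple consists of a nonzero homogeneous
`h`, each cone is contained in `M`, and `M` is the internal direct sum of the cones. -/
def IsConeDecomp {N : ℕ} {K : Type*} [Field K] (𝒟 : Finset (ConeTriple N K))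
    (M : Submodule K (MvPolynomial (Fin N) K)) : Prop :=
  (∀ p ∈ 𝒟, p.2.2 ≠ 0 ∧ ∃ e : ℕ, p.2.2.IsHomogeneous e) ∧
  (∀ p ∈ 𝒟, cone p ≤ M) ∧
  M = (⨆ p ∈ 𝒟, cone p) ∧
  ∀ p ∈ 𝒟, Disjoint (cone p) (⨆ q ∈ 𝒟.erase p, cone q)

/-- `𝒟` is `d`-standard. -/
def IsStandardDecomp {N : ℕ} {K : Type*} [Field K] (d : ℕ)
    (𝒟 : Finset (ConeTriple N K)) : Prop :=
  (∀ p ∈ 𝒟, p.2.1.Nonempty → d ≤ coneDeg p) ∧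
  ∀ p ∈ 𝒟, p.2.1.Nonempty → ∀ d', d ≤ d' → d' ≤ coneDeg p →
    ∃ q ∈ 𝒟, q.2.1.Nonempty ∧ coneDeg q = d' ∧ p.2.1.card ≤ q.2.1.card

/-- The degree of a cone decomposition, as an element of `ℕ ∪ {−∞}`. -/
def decompDeg {N : ℕ} {K : Type*} [Field K] (𝒟 : Finset (ConeTriple N K)) :
    WithBot ℕ :=
  (𝒟.image coneDeg).max

/-! The cone `C(w,y,h)` is the image under multiplication by `h ≠ 0` of the span of the
monomials with exponent in `w + ℕ^y`. Sorting these exponents by whether their `i`-th entry is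
`w i` or larger writes `w + ℕ^y` as the disjoint union of `w + ℕ^(y ∖ {i})` and
`w + εᵢ + ℕ^y`; since multiplication by `h` is injective, `C(w,y,h)` is the direct sum of the
two new cones, and replacing a summand of a direct sum by a direct sum of two pieces keeps it
direct (modularity of the lattice of subspaces).

The new cones have degrees `deg` and `deg + 1`, where `deg = |w| + deg h`. The only witness of
`d`-standardness that is lost is `(w,y,h)` itself, at degree `deg`, and `(v,z,g)` takes its
place since `#z ≥ #y`; at degree `deg + 1` the cone `(w + εᵢ, y, h)` is its own witness. -/

section Lattice

variable {α ι : Type*} [CompleteLattice α] [DecidableEq ι] (f : ι → α)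
  {s : Finset ι} {p₀ p₁ p₂ : ι}

theorem iSup_erase_union_pair (hp₀ : p₀ ∈ s) (hsplit : f p₀ = f p₁ ⊔ f p₂) :
    ⨆ p ∈ s.erase p₀ ∪ {p₁, p₂}, f p = ⨆ p ∈ s, f p := by
  rw [Finset.iSup_union, Finset.iSup_insert, Finset.iSup_singleton, ← hsplit, sup_comm,
    ← Finset.iSup_insert, Finset.insert_erase hp₀]

theorem iSup_erase_union_pair_erase_left_le :
    ⨆ q ∈ (s.erase p₀ ∪ {p₁, p₂}).erase p₁, f q ≤ f p₂ ⊔ ⨆ q ∈ s.erase p₀, f q := by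
  refine iSup₂_le fun q hq => ?_
  obtain ⟨hqp₁, hq⟩ := Finset.mem_erase.1 hq
  simp only [Finset.mem_union, Finset.mem_insert, Finset.mem_singleton] at hq
  rcases hq with hq | rfl | rfl
  · exact le_sup_of_le_right (le_iSup₂_of_le q hq le_rfl)
  · exact absurd rfl hqp₁
  · exact le_sup_left

theorem iSup_erase_union_pair_erase_le (hp₀ : p₀ ∈ s) (hsplit : f p₀ = f p₁ ⊔ f p₂)
    {p : ι} (hp : p ∈ s.erase p₀) :
    ⨆ q ∈ (s.erase p₀ ∪ {p₁, p₂}).erase p, f q ≤ ⨆ q ∈ s.erase p, f q := by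
  have hpp₀ := Finset.ne_of_mem_erase hp
  refine iSup₂_le fun q hq => ?_
  obtain ⟨hqp, hq⟩ := Finset.mem_erase.1 hq
  have hfp₀ : f p₀ ≤ ⨆ q ∈ s.erase p, f q :=
    le_iSup₂_of_le p₀ (Finset.mem_erase.2 ⟨Ne.symm hpp₀, hp₀⟩) le_rfl
  simp only [Finset.mem_union, Finset.mem_insert, Finset.mem_singleton] at hq
  rcases hq with hq | rfl | rfl
  · exact le_iSup₂_of_le q (Finset.mem_erase.2 ⟨hqp, (Finset.mem_erase.1 hq).2⟩) le_rfl
  · exact (hsplit ▸ le_sup_left).trans hfp₀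
  · exact (hsplit ▸ le_sup_right).trans hfp₀

theorem disjoint_iSup_erase_union_pair [IsModularLattice α] (hp₀ : p₀ ∈ s)
    (hsplit : f p₀ = f p₁ ⊔ f p₂) (hdisj : Disjoint (f p₁) (f p₂))
    (hs : ∀ p ∈ s, Disjoint (f p) (⨆ q ∈ s.erase p, f q)) :
    ∀ p ∈ s.erase p₀ ∪ {p₁, p₂},
      Disjoint (f p) (⨆ q ∈ (s.erase p₀ ∪ {p₁, p₂}).erase p, f q) := by
  have hs₀ := hs p₀ hp₀
  rw [hsplit] at hs₀
  intro p hp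
  simp only [Finset.mem_union, Finset.mem_insert, Finset.mem_singleton] at hp
  rcases hp with hp | rfl | rfl
  · exact (hs p (Finset.mem_of_mem_erase hp)).mono_right
      (iSup_erase_union_pair_erase_le f hp₀ hsplit hp)
  · exact (hdisj.disjoint_sup_right_of_disjoint_sup_left hs₀).mono_right
      (iSup_erase_union_pair_erase_left_le f)
  · rw [Finset.pair_comm]
    rw [sup_comm] at hs₀
    exact (hdisj.symm.disjoint_sup_right_of_disjoint_sup_left hs₀).mono_right
      (iSup_erase_union_pair_erase_left_le f)

end Lattice

section RestrictSupport

variable {σ R : Type*} [CommSemiring R]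

theorem MvPolynomial.restrictSupport_union (s t : Set (σ →₀ ℕ)) :
    restrictSupport R (s ∪ t) = restrictSupport R s ⊔ restrictSupport R t := by
  simp only [restrictSupport_eq_span, Set.image_union, Submodule.span_union]

theorem MvPolynomial.disjoint_restrictSupport {s t : Set (σ →₀ ℕ)} (hst : Disjoint s t) :
    Disjoint (restrictSupport R s) (restrictSupport R t) := by
  rw [Submodule.disjoint_def]
  intro r hs ht
  rw [mem_restrictSupport_iff] at hs ht
  exact support_eq_empty.1 (Finset.coe_eq_empty.1
    (Set.subset_empty_iff.1 (Set.disjoint_iff_inter_eq_empty.1 hst ▸ Set.subset_inter hs ht)))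

def coneExponents (w : σ →₀ ℕ) (y : Finset σ) : Set (σ →₀ ℕ) :=
  {α | w ≤ α ∧ ∀ j ∉ y, α j = w j}

variable [DecidableEq σ] {w : σ →₀ ℕ} {y : Finset σ} {i : σ}

theorem coneExponents_eq_union (hi : i ∈ y) :
    coneExponents w y =
      coneExponents w (y.erase i) ∪ coneExponents (w + Finsupp.single i 1) y := by
  ext α
  constructor
  · rintro ⟨hle, hα⟩
    by_cases hαi : α i = w i
    · refine Or.inl ⟨hle, fun j hj => ?_⟩
      by_cases hji : j = i
      · exact hji ▸ hαi
      · exact hα j fun hjy => hj (Finset.mem_erase.2 ⟨hji, hjy⟩)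
    · refine Or.inr ⟨fun k => ?_, fun j hj => ?_⟩
      · rcases eq_or_ne k i with rfl | hki
        · have := hle k
          simp only [Finsupp.add_apply, Finsupp.single_eq_same]
          omega
        · simpa [hki] using hle k
      · have hji : j ≠ i := fun e => hj (e ▸ hi)
        simpa [hji] using hα j hj
  · rintro (⟨hle, hα⟩ | ⟨hle, hα⟩)
    · exact ⟨hle, fun j hj => hα j fun hj' => hj (Finset.mem_of_mem_erase hj')⟩
    · refine ⟨le_self_add.trans hle, fun j hj => ?_⟩
      have hji : j ≠ i := fun e => hj (e ▸ hi)
      simpa [hji] using hα j hj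

theorem disjoint_coneExponents_erase_add_single :
    Disjoint (coneExponents w (y.erase i)) (coneExponents (w + Finsupp.single i 1) y) := by
  rw [Set.disjoint_left]
  rintro α ⟨-, hα⟩ ⟨hle, -⟩
  have := hle i
  simp only [Finsupp.add_apply, Finsupp.single_eq_same, hα i (Finset.notMem_erase i y)] at this
  omega

end RestrictSupport

section Cone

variable {N : ℕ} {K : Type*} [Field K]

theorem cone_eq_map_restrictSupport (p : ConeTriple N K) :
    cone p = (restrictSupport K (coneExponents p.1 p.2.1)).map (LinearMap.mulRight K p.2.2) := by
  rw [cone, restrictSupport_eq_span, Submodule.map_span, Set.image_image]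
  congr 1
  ext q
  constructor
  · rintro ⟨γ, hγ, rfl⟩
    exact ⟨p.1 + γ, ⟨le_self_add, fun j hj => by simp [hγ j hj]⟩, rfl⟩
  · rintro ⟨α, ⟨hle, hα⟩, rfl⟩
    refine ⟨α - p.1, fun j hj => by simp [hα j hj], ?_⟩
    rw [add_tsub_cancel_of_le hle]
    rfl

variable {w : Fin N →₀ ℕ} {y : Finset (Fin N)} {h : MvPolynomial (Fin N) K} {i : Fin N}

theorem cone_eq_sup_split (hi : i ∈ y) :
    cone ((w, y, h) : ConeTriple N K) =
      cone (w, y.erase i, h) ⊔ cone (w + Finsupp.single i 1, y, h) := by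
  rw [cone_eq_map_restrictSupport, cone_eq_map_restrictSupport, cone_eq_map_restrictSupport,
    ← Submodule.map_sup, ← restrictSupport_union, ← coneExponents_eq_union hi]

theorem disjoint_cone_split (hh : h ≠ 0) :
    Disjoint (cone ((w, y.erase i, h) : ConeTriple N K))
      (cone (w + Finsupp.single i 1, y, h)) := by
  rw [cone_eq_map_restrictSupport, cone_eq_map_restrictSupport]
  exact Submodule.disjoint_map (mul_left_injective₀ hh)
    (disjoint_restrictSupport disjoint_coneExponents_erase_add_single)

theorem coneDeg_add_single (w : Fin N →₀ ℕ) (y : Finset (Fin N)) (h : MvPolynomial (Fin N) K)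
    (i : Fin N) :
    coneDeg ((w + Finsupp.single i 1, y, h) : ConeTriple N K) = coneDeg (w, y, h) + 1 := by
  rw [coneDeg, coneDeg]
  simp only [Finsupp.add_apply, Finset.sum_add_distrib]
  rw [Finsupp.univ_sum_single_apply]
  omega

end Cone

section Decomposition

variable {N : ℕ} {K : Type*} [Field K] {𝒟 : Finset (ConeTriple N K)}
  {w v : Fin N →₀ ℕ} {y z : Finset (Fin N)} {h g : MvPolynomial (Fin N) K} {i : Fin N}

theorem IsConeDecomp.split {M : Submodule K (MvPolynomial (Fin N) K)}
    (hdec : IsConeDecomp 𝒟 M) (hwy : (w, y, h) ∈ 𝒟) (hi : i ∈ y) :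
    IsConeDecomp
      (𝒟.erase (w, y, h) ∪ {(w, y.erase i, h), (w + Finsupp.single i 1, y, h)}) M := by
  obtain ⟨hgen, hle, hsup, hind⟩ := hdec
  have hsplit := cone_eq_sup_split (w := w) (h := h) hi
  refine ⟨fun p hp => ?_, fun p hp => ?_, ?_,
    disjoint_iSup_erase_union_pair cone hwy hsplit (disjoint_cone_split (hgen _ hwy).1) hind⟩
  · simp only [Finset.mem_union, Finset.mem_insert, Finset.mem_singleton] at hp
    rcases hp with hp | rfl | rfl
    · exact hgen p (Finset.mem_of_mem_erase hp)
    all_goals exact hgen (w, y, h) hwy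
  · simp only [Finset.mem_union, Finset.mem_insert, Finset.mem_singleton] at hp
    rcases hp with hp | rfl | rfl
    · exact hle p (Finset.mem_of_mem_erase hp)
    · exact (hsplit ▸ le_sup_left).trans (hle _ hwy)
    · exact (hsplit ▸ le_sup_right).trans (hle _ hwy)
  · rw [iSup_erase_union_pair cone hwy hsplit, hsup]

theorem exists_mem_erase_of_coneDeg_eq {p₀ p' : ConeTriple N K} (hp' : p' ∈ 𝒟)
    (hne : p₀ ≠ p') (hdeg : coneDeg p₀ = coneDeg p') (hcard : p₀.2.1.card ≤ p'.2.1.card)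
    {d' c : ℕ} (hq : ∃ q ∈ 𝒟, q.2.1.Nonempty ∧ coneDeg q = d' ∧ c ≤ q.2.1.card) :
    ∃ q ∈ 𝒟.erase p₀, q.2.1.Nonempty ∧ coneDeg q = d' ∧ c ≤ q.2.1.card := by
  obtain ⟨q, hq, hqy, hqdeg, hqcard⟩ := hq
  by_cases hqp : q = p₀
  · subst hqp
    exact ⟨p', Finset.mem_erase.2 ⟨hne.symm, hp'⟩,
      Finset.card_pos.1 (hqy.card_pos.trans_le hcard), hdeg ▸ hqdeg, hqcard.trans hcard⟩
  · exact ⟨q, Finset.mem_erase.2 ⟨hqp, hq⟩, hqy, hqdeg, hqcard⟩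

theorem IsStandardDecomp.split {d : ℕ} (hstd : IsStandardDecomp d 𝒟) (hwy : (w, y, h) ∈ 𝒟)
    (hvz : (v, z, g) ∈ 𝒟) (hne : (w, y, h) ≠ (v, z, g))
    (hdeg : coneDeg ((w, y, h) : ConeTriple N K) = coneDeg ((v, z, g) : ConeTriple N K))
    (hcard : y.card ≤ z.card) (hi : i ∈ y) :
    IsStandardDecomp d
      (𝒟.erase (w, y, h) ∪ {(w, y.erase i, h), (w + Finsupp.single i 1, y, h)}) := by
  obtain ⟨hge, hwit⟩ := hstd
  have hy : y.Nonempty := ⟨i, hi⟩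
  have transfer {d' c : ℕ} (hq : ∃ q ∈ 𝒟, q.2.1.Nonempty ∧ coneDeg q = d' ∧ c ≤ q.2.1.card) :
      ∃ q ∈ 𝒟.erase (w, y, h) ∪ {(w, y.erase i, h), (w + Finsupp.single i 1, y, h)},
        q.2.1.Nonempty ∧ coneDeg q = d' ∧ c ≤ q.2.1.card := by
    obtain ⟨q, hq, hqT⟩ := exists_mem_erase_of_coneDeg_eq hvz hne hdeg hcard hq
    exact ⟨q, Finset.mem_union_left _ hq, hqT⟩
  refine ⟨fun p hp hpy => ?_, fun p hp hpy d' hd' hd'p => ?_⟩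
  · simp only [Finset.mem_union, Finset.mem_insert, Finset.mem_singleton] at hp
    rcases hp with hp | rfl | rfl
    · exact hge p (Finset.mem_of_mem_erase hp) hpy
    · exact hge (w, y, h) hwy hy
    · rw [coneDeg_add_single]
      exact (hge _ hwy hy).trans (Nat.le_succ _)
  · simp only [Finset.mem_union, Finset.mem_insert, Finset.mem_singleton] at hp
    rcases hp with hp | rfl | rfl
    · exact transfer (hwit p (Finset.mem_of_mem_erase hp) hpy d' hd' hd'p)
    · obtain ⟨q, hq, hqy, hqdeg, hqcard⟩ := transfer (hwit _ hwy hy d' hd' hd'p)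
      exact ⟨q, hq, hqy, hqdeg, Finset.card_erase_le.trans hqcard⟩
    · rw [coneDeg_add_single] at hd'p
      rcases Nat.lt_or_ge (coneDeg ((w, y, h) : ConeTriple N K)) d' with hlt | hle
      · exact ⟨_, Finset.mem_union_right _ (by simp), hy,
          (coneDeg_add_single w y h i).trans (by omega), le_rfl⟩
      · exact transfer (hwit _ hwy hy d' hd' hle)

end Decomposition

theorem exactness_split_general {K : Type*} [Field K]
    {N : ℕ} (M : Submodule K (MvPolynomial (Fin N) K))
    (d : ℕ) (𝒟 : Finset (ConeTriple N K))
    (hdec : IsConeDecomp 𝒟 M) (hstd : IsStandardDecomp d 𝒟)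
    (w v : Fin N →₀ ℕ) (y z : Finset (Fin N)) (h g : MvPolynomial (Fin N) K)
    (hwy : (w, y, h) ∈ 𝒟) (hvz : (v, z, g) ∈ 𝒟)
    (hne : (w, y, h) ≠ (v, z, g))
    (hdeg : coneDeg ((w, y, h) : ConeTriple N K) = coneDeg ((v, z, g) : ConeTriple N K))
    (hcard : y.card ≤ z.card)
    (i : Fin N) (hi : i ∈ y) :
    IsConeDecomp
      ((𝒟.erase (w, y, h)) ∪
        {(w, y.erase i, h), (w + Finsupp.single i 1, y, h)}) M ∧
    IsStandardDecomp d
      ((𝒟.erase (w, y, h)) ∪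
        {(w, y.erase i, h), (w + Finsupp.single i 1, y, h)}) :=
  ⟨hdec.split hwy hi, hstd.split hwy hvz hne hdeg hcard hi⟩

theorem exactness_split {K : Type*} [Field K]
    {N : ℕ} (hN : 1 ≤ N) (M : Submodule K (MvPolynomial (Fin N) K))
    (hM : IsHomogeneousSubspace M)
    (d : ℕ) (𝒟 : Finset (ConeTriple N K))
    (hdec : IsConeDecomp 𝒟 M) (hstd : IsStandardDecomp d 𝒟)
    (w v : Fin N →₀ ℕ) (y z : Finset (Fin N)) (h g : MvPolynomial (Fin N) K)
    (hwy : (w, y, h) ∈ 𝒟) (hvz : (v, z, g) ∈ 𝒟)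
    (hne : (w, y, h) ≠ (v, z, g))
    (hdeg : coneDeg ((w, y, h) : ConeTriple N K) = coneDeg ((v, z, g) : ConeTriple N K))
    (hcard : y.card ≤ z.card) (hy : 0 < y.card)
    (i : Fin N) (hi : i ∈ y) :
    IsConeDecomp
      ((𝒟.erase (w, y, h)) ∪
        {(w, y.erase i, h), (w + Finsupp.single i 1, y, h)}) M ∧
    IsStandardDecomp d
      ((𝒟.erase (w, y, h)) ∪
        {(w, y.erase i, h), (w + Finsupp.single i 1, y, h)}) :=
  exactness_split_general M d 𝒟 hdec hstd w v y z h g hwy hvz hne hdeg hcard i hi
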